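/- arXiv:2508.10149 — 2 statements merged into one kernel-verified Lean document; each statement's English description precedes it below -/
import Mathlib

section
/- Let Λ : [0,1] → ℝ have a continuous first derivative and a bounded second derivative on [0,1], and set θ = ∫_0^1 Λ(s) ds. Let U_(1) ≤ ... ≤ U_(n) be the order statistics of n independent Uniform(0,1) random variables, with U_(0) = 0 and U_(n+1) = 1, and define the quantile importance sampling (trapezoid) estimator θ̂_QIS = (1/2) Σ_{i=1}^{n+1} (U_(i) − U_(i−1)) [Λ(U_(i−1)) + Λ(U_(i))]. Then there exists a constant M > 0 such that E[(θ − θ̂_QIS)²] ≤ M / n⁴ for all n ≥ 1. -/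
open MeasureTheory ProbabilityTheory

/-- The points `0 = U_(0) ≤ U_(1) ≤ … ≤ U_(n) ≤ U_(n+1) = 1`: the order
statistics of the sample `u`, augmented by the endpoints `0` and `1`. -/
noncomputable def qisPoints (n : ℕ) (u : Fin n → ℝ) : Fin (n + 2) → ℝ :=
  Fin.cons 0 (Fin.snoc (u ∘ Tuple.sort u) 1)

/-- The quantile importance sampling (trapezoid) estimator
`θ̂_QIS = (1/2) ∑_{i=1}^{n+1} (U_(i) − U_(i−1)) (Λ(U_(i−1)) + Λ(U_(i)))`. -/
noncomputable def qisEstimate (Λ : ℝ → ℝ) (n : ℕ) (u : Fin n → ℝ) : ℝ :=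
  (1 / 2) * ∑ i : Fin (n + 1),
    (qisPoints n u i.succ - qisPoints n u i.castSucc) *
      (Λ (qisPoints n u i.castSucc) + Λ (qisPoints n u i.succ))

set_option linter.unusedVariables false
set_option linter.unusedSectionVars false
set_option maxHeartbeats 1000000

section Aux


lemma trap_err (Λ Λ' Λ'' : ℝ → ℝ)
    (hd1 : ∀ s ∈ Set.Icc (0 : ℝ) 1, HasDerivWithinAt Λ (Λ' s) (Set.Icc 0 1) s)
    (hd2 : ∀ s ∈ Set.Icc (0 : ℝ) 1, HasDerivWithinAt Λ' (Λ'' s) (Set.Icc 0 1) s)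
    {C : ℝ} (hC : ∀ s ∈ Set.Icc (0 : ℝ) 1, |Λ'' s| ≤ C)
    {a b : ℝ} (ha : a ∈ Set.Icc (0:ℝ) 1) (hb : b ∈ Set.Icc (0:ℝ) 1) (hab : a ≤ b) :
    |(∫ x in a..b, Λ x) - (b - a) * (Λ a + Λ b) / 2| ≤ 2 * C * (b - a) ^ 3 := by
  have hsub : Set.Icc a b ⊆ Set.Icc (0:ℝ) 1 :=
    Set.Icc_subset_Icc ha.1 hb.2
  have hC0 : 0 ≤ C := le_trans (abs_nonneg _) (hC 0 (by norm_num))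
  have hba : 0 ≤ b - a := sub_nonneg.2 hab
  have h1 : ∀ x ∈ Set.Icc a b, |Λ' x - Λ' a| ≤ C * (b - a) := by
    intro x hx
    have h := (convex_Icc a b).norm_image_sub_le_of_norm_hasDerivWithin_le
      (f := Λ') (f' := Λ'') (C := C)
      (fun y hy => (hd2 y (hsub hy)).mono hsub)
      (fun y hy => by simpa using hC y (hsub hy))
      (Set.left_mem_Icc.2 hab) hx
    have h' : |Λ' x - Λ' a| ≤ C * ‖x - a‖ := by simpa [Real.norm_eq_abs] using h
    have hx' : ‖x - a‖ ≤ b - a := by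
      rw [Real.norm_eq_abs, abs_of_nonneg (sub_nonneg.2 hx.1)]; linarith [hx.2]
    exact le_trans h' (mul_le_mul_of_nonneg_left hx' hC0)
  set g : ℝ → ℝ := fun x => Λ x - Λ a - (x - a) * Λ' a with hg
  have h2 : ∀ x ∈ Set.Icc a b, |g x| ≤ C * (b - a) ^ 2 := by
    intro x hx
    have h := (convex_Icc a b).norm_image_sub_le_of_norm_hasDerivWithin_le
      (f := fun y => Λ y - y * Λ' a) (f' := fun y => Λ' y - Λ' a) (C := C * (b - a))
      (fun y hy => by
        simpa using ((hd1 y (hsub hy)).mono hsub).fun_sub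
          ((hasDerivWithinAt_id y (Set.Icc a b)).mul_const (Λ' a)))
      (fun y hy => by simpa [Real.norm_eq_abs] using h1 y hy)
      (Set.left_mem_Icc.2 hab) hx
    have hx' : ‖x - a‖ ≤ b - a := by
      rw [Real.norm_eq_abs, abs_of_nonneg (sub_nonneg.2 hx.1)]; linarith [hx.2]
    have e : (Λ x - x * Λ' a) - (Λ a - a * Λ' a) = g x := by simp only [hg]; ring
    have h' : |g x| ≤ C * (b - a) * ‖x - a‖ := by
      rw [← e]; simpa [Real.norm_eq_abs] using h
    have := le_trans h' (mul_le_mul_of_nonneg_left hx' (by positivity))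
    nlinarith [this]
  have hΛc : ContinuousOn Λ (Set.Icc a b) :=
    fun x hx => ((hd1 x (hsub hx)).continuousWithinAt).mono hsub
  have hgi : IntervalIntegrable g volume a b := by
    apply ContinuousOn.intervalIntegrable
    rw [Set.uIcc_of_le hab]
    exact (hΛc.sub continuousOn_const).sub (Continuous.continuousOn (by continuity))
  have key : ∫ x in a..b, Λ x
      = (b - a) * Λ a + (b - a) ^ 2 / 2 * Λ' a + ∫ x in a..b, g x := by
    have hcongr : ∀ x, Λ x = (Λ a + (x - a) * Λ' a) + g x := by
      intro x; simp only [hg]; ring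
    have i1 : IntervalIntegrable (fun x : ℝ => Λ a + (x - a) * Λ' a) volume a b :=
      ((continuous_const.add (((continuous_id').sub continuous_const).mul continuous_const)).intervalIntegrable _ _)
    have i2 : IntervalIntegrable (fun x : ℝ => (x - a) * Λ' a) volume a b :=
      ((((continuous_id').sub continuous_const).mul continuous_const).intervalIntegrable _ _)
    rw [intervalIntegral.integral_congr (fun x _ => hcongr x),
      intervalIntegral.integral_add i1 hgi]
    congr 1
    rw [intervalIntegral.integral_add intervalIntegrable_const i2,
      intervalIntegral.integral_const, intervalIntegral.integral_mul_const]
    have hid : ∫ x in a..b, (x - a) = (b - a)^2/2 := by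
      rw [intervalIntegral.integral_comp_sub_right (fun x => x) a, integral_id]; ring
    rw [hid]; simp
  have hgb : |g b| ≤ C * (b - a) ^ 2 := h2 b (Set.right_mem_Icc.2 hab)
  have hint : |∫ x in a..b, g x| ≤ C * (b - a) ^ 2 * (b - a) := by
    have hbd : ∀ x ∈ Set.uIoc a b, ‖g x‖ ≤ C * (b - a) ^ 2 := by
      intro x hx
      rw [Set.uIoc_of_le hab] at hx
      simpa [Real.norm_eq_abs] using h2 x (Set.Ioc_subset_Icc_self hx)
    have h := intervalIntegral.norm_integral_le_of_norm_le_const hbd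
    simpa [Real.norm_eq_abs, abs_of_nonneg hba] using h
  have hΛb : Λ b = Λ a + (b - a) * Λ' a + g b := by simp only [hg]; ring
  rw [key, hΛb]
  have e2 : (b - a) * Λ a + (b - a) ^ 2 / 2 * Λ' a + (∫ x in a..b, g x)
      - (b - a) * (Λ a + (Λ a + (b - a) * Λ' a + g b)) / 2
      = (∫ x in a..b, g x) - (b - a) * g b / 2 := by ring
  rw [e2]
  have habs : |(∫ x in a..b, g x) - (b - a) * g b / 2|
      ≤ |∫ x in a..b, g x| + |(b - a) * g b / 2| := abs_sub _ _
  have h3 : |(b - a) * g b / 2| ≤ (b - a) * (C * (b - a)^2) / 2 := by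
    rw [abs_div, abs_mul, abs_of_nonneg hba]
    have : |(2:ℝ)| = 2 := by norm_num
    rw [this]
    apply div_le_div_of_nonneg_right _ (by norm_num)
    exact mul_le_mul_of_nonneg_left hgb hba
  nlinarith [hint, h3, habs, mul_nonneg hC0 (pow_nonneg hba 3)]

variable {n : ℕ} {u : Fin n → ℝ}

lemma qis_mem (hu : ∀ i, u i ∈ Set.Icc (0:ℝ) 1) (k : Fin (n+2)) :
    qisPoints n u k ∈ Set.Icc (0:ℝ) 1 := by
  unfold qisPoints
  refine Fin.cases ?_ (fun j => ?_) k
  · simp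
  · rw [Fin.cons_succ]
    refine Fin.lastCases ?_ (fun i => ?_) j
    · simp
    · rw [Fin.snoc_castSucc]; exact hu _

lemma qis_zero : qisPoints n u 0 = 0 := by simp [qisPoints]

lemma qis_last : qisPoints n u (Fin.last (n+1)) = 1 := by
  have : (Fin.last (n+1)) = (Fin.last n).succ := by
    ext; simp
  rw [qisPoints, this, Fin.cons_succ, Fin.snoc_last]

lemma qis_mono (hu : ∀ i, u i ∈ Set.Icc (0:ℝ) 1) : Monotone (qisPoints n u) := by
  have hv : Monotone (u ∘ Tuple.sort u) := Tuple.monotone_sort u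
  rw [Fin.monotone_iff_le_succ]
  intro i
  refine Fin.cases ?_ (fun j => ?_) i
  · -- castSucc 0 = 0
    have h0 : qisPoints n u (Fin.castSucc 0) = 0 := by
      have : (Fin.castSucc (0 : Fin (n+1))) = 0 := rfl
      rw [this, qis_zero]
    rw [h0]
    exact (qis_mem hu _).1
  · have hc : Fin.castSucc (j.succ) = (Fin.castSucc j).succ := rfl
    rw [hc, qisPoints, Fin.cons_succ, Fin.cons_succ]
    -- goal : snoc v 1 (castSucc j) ≤ snoc v 1 (j.succ)
    rcases Fin.eq_castSucc_or_eq_last j.succ with ⟨j', hj'⟩ | hj'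
    · rw [hj', Fin.snoc_castSucc, Fin.snoc_castSucc]
      apply hv
      have : (j' : ℕ) = (j : ℕ) + 1 := by
        have := congrArg (Fin.val) hj'; simpa using this.symm
      exact le_of_lt (by omega : (j:ℕ) < (j':ℕ))
    · rw [hj', Fin.snoc_castSucc, Fin.snoc_last]
      exact (hu _).2

/-- every sample value is a qisPoint with index of the form `(castSucc i).succ` -/
lemma qis_sample_mem (j : Fin n) : ∃ k : Fin n,
    qisPoints n u ((Fin.castSucc k).succ) = u j := by
  refine ⟨(Tuple.sort u)⁻¹ j, ?_⟩
  rw [qisPoints, Fin.cons_succ, Fin.snoc_castSucc]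
  simp

lemma det_bound (Λ Λ' Λ'' : ℝ → ℝ)
    (hd1 : ∀ s ∈ Set.Icc (0 : ℝ) 1, HasDerivWithinAt Λ (Λ' s) (Set.Icc 0 1) s)
    (hd2 : ∀ s ∈ Set.Icc (0 : ℝ) 1, HasDerivWithinAt Λ' (Λ'' s) (Set.Icc 0 1) s)
    {C : ℝ} (hC : ∀ s ∈ Set.Icc (0 : ℝ) 1, |Λ'' s| ≤ C)
    (hu : ∀ i, u i ∈ Set.Icc (0:ℝ) 1)
    (htrap : ∀ {a b : ℝ}, a ∈ Set.Icc (0:ℝ) 1 → b ∈ Set.Icc (0:ℝ) 1 → a ≤ b →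
      |(∫ x in a..b, Λ x) - (b - a) * (Λ a + Λ b) / 2| ≤ 2 * C * (b - a) ^ 3) :
    |(∫ s in (0:ℝ)..1, Λ s) - qisEstimate Λ n u|
      ≤ 2 * C * ∑ i : Fin (n+1),
          (qisPoints n u i.succ - qisPoints n u i.castSucc) ^ 3 := by
  set p := qisPoints n u with hp
  have hmono : Monotone p := qis_mono hu
  have hmem : ∀ k, p k ∈ Set.Icc (0:ℝ) 1 := qis_mem hu
  have hΛc : ContinuousOn Λ (Set.Icc 0 1) := fun x hx => (hd1 x hx).continuousWithinAt
  set a : ℕ → ℝ := fun k => p ⟨min k (n+1), by omega⟩ with ha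
  have hint : ∀ k, k < n + 1 → IntervalIntegrable Λ volume (a k) (a (k+1)) := by
    intro k hk
    apply ContinuousOn.intervalIntegrable
    apply hΛc.mono
    intro x hx
    rcases Set.mem_uIcc.1 hx with ⟨h1, h2⟩ | ⟨h1, h2⟩ <;>
      exact ⟨le_trans (hmem _).1 h1, le_trans h2 (hmem _).2⟩
  have key : ∫ s in (0:ℝ)..1, Λ s
      = ∑ i : Fin (n+1), ∫ x in p i.castSucc..p i.succ, Λ x := by
    have h := intervalIntegral.sum_integral_adjacent_intervals (a := a) hint
    have ha0 : a 0 = 0 := by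
      show p ⟨min 0 (n+1), _⟩ = 0
      have : (⟨min 0 (n+1), by omega⟩ : Fin (n+2)) = 0 := by ext; simp
      rw [this, hp, qis_zero]
    have han : a (n+1) = 1 := by
      show p ⟨min (n+1) (n+1), _⟩ = 1
      have : (⟨min (n+1) (n+1), by omega⟩ : Fin (n+2)) = Fin.last (n+1) := by ext; simp
      rw [this, hp, qis_last]
    rw [ha0, han] at h
    rw [← h, Finset.sum_range]
    apply Finset.sum_congr rfl
    intro i _
    congr 1
    · show p _ = p _
      congr 1; ext; simp [Nat.min_eq_left (by omega : (i:ℕ) ≤ n + 1)]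
    · show p _ = p _
      congr 1; ext; simp [Nat.min_eq_left (by omega : (i:ℕ) + 1 ≤ n + 1)]
  have hest : qisEstimate Λ n u
      = ∑ i : Fin (n+1), (p i.succ - p i.castSucc) * (Λ (p i.castSucc) + Λ (p i.succ)) / 2 := by
    rw [qisEstimate, Finset.mul_sum]
    apply Finset.sum_congr rfl
    intro i _; ring
  rw [key, hest, ← Finset.sum_sub_distrib]
  refine le_trans (Finset.abs_sum_le_sum_abs _ _) ?_
  rw [Finset.mul_sum]
  apply Finset.sum_le_sum
  intro i _
  exact htrap (hmem _) (hmem _) (hmono (Fin.castSucc_lt_succ (i := i)).le)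


noncomputable abbrev pi01 : Measure ℝ := volume.restrict (Set.Icc (0:ℝ) 1)

def Tset (a b : ℝ) : Set (ℝ × ℝ) := {z | a ≤ z.1 ∧ z.1 ≤ z.2 ∧ z.2 ≤ b}

lemma Tset_meas (a b : ℝ) : MeasurableSet (Tset a b) := by
  have h1 : MeasurableSet {z : ℝ × ℝ | a ≤ z.1} :=
    measurableSet_le measurable_const measurable_fst
  have h2 : MeasurableSet {z : ℝ × ℝ | z.1 ≤ z.2} :=
    measurableSet_le measurable_fst measurable_snd
  have h3 : MeasurableSet {z : ℝ × ℝ | z.2 ≤ b} :=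
    measurableSet_le measurable_snd measurable_const
  exact (h1.inter (h2.inter h3))

instance : IsProbabilityMeasure pi01 := by
  constructor
  rw [Measure.restrict_apply_univ, Real.volume_Icc]
  norm_num

lemma block_integral {a b : ℝ} (h0 : 0 ≤ a) (hab : a ≤ b) (hb1 : b ≤ 1) :
    ∫ z, (Tset a b).indicator (fun z : ℝ × ℝ => (z.2 - z.1)^4) z ∂(pi01.prod pi01)
      = (b - a)^6 / 30 := by
  set f : ℝ × ℝ → ℝ := (Tset a b).indicator (fun z => (z.2 - z.1)^4) with hf
  have hfm : Measurable f :=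
    ((measurable_snd.sub measurable_fst).pow_const 4).indicator (Tset_meas a b)
  have hfb : ∀ z, ‖f z‖ ≤ 1 := by
    intro z
    rw [Real.norm_eq_abs]
    by_cases hz : z ∈ Tset a b
    · rw [hf, Set.indicator_of_mem hz]
      obtain ⟨hza, hz12, hzb⟩ := hz
      rw [abs_of_nonneg (by positivity)]
      have : |z.2 - z.1| ≤ 1 := by rw [abs_of_nonneg (by linarith)]; linarith
      calc (z.2-z.1)^4 = |z.2-z.1|^4 := by rw [abs_of_nonneg (by linarith)]
        _ ≤ 1 := by exact pow_le_one₀ (abs_nonneg _) this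
    · rw [hf, Set.indicator_of_notMem hz]; norm_num
  have hfi : Integrable f (pi01.prod pi01) := by
    refine (integrable_const (1:ℝ)).mono' hfm.aestronglyMeasurable ?_
    exact Filter.Eventually.of_forall hfb
  rw [MeasureTheory.integral_prod f hfi]
  have hinner : ∀ s : ℝ, (∫ t, f (s, t) ∂pi01)
      = (Set.Icc a b).indicator (fun s => (b - s)^5 / 5) s := by
    intro s
    by_cases hs : s ∈ Set.Icc a b
    · have he : (fun t => f (s, t)) = (Set.Icc s b).indicator (fun t => (t - s)^4) := by
        funext t
        by_cases ht : t ∈ Set.Icc s b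
        · rw [Set.indicator_of_mem ht]
          have : (s, t) ∈ Tset a b := ⟨hs.1, ht.1, ht.2⟩
          rw [hf, Set.indicator_of_mem this]
        · have : (s, t) ∉ Tset a b := by
            intro ⟨h1', h2', h3'⟩; exact ht ⟨h2', h3'⟩
          rw [Set.indicator_of_notMem ht, hf, Set.indicator_of_notMem this]
      rw [he, integral_indicator measurableSet_Icc]
      rw [Measure.restrict_restrict measurableSet_Icc]
      have : Set.Icc s b ∩ Set.Icc 0 1 = Set.Icc s b :=
        Set.inter_eq_left.2 (Set.Icc_subset_Icc (le_trans h0 hs.1) hb1)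
      rw [this, Set.indicator_of_mem hs]
      rw [MeasureTheory.integral_Icc_eq_integral_Ioc,
        ← intervalIntegral.integral_of_le hs.2]
      rw [intervalIntegral.integral_comp_sub_right (fun x => x^4) s, integral_pow]
      norm_num
    · have he : (fun t => f (s, t)) = fun _ => (0:ℝ) := by
        funext t
        have : (s, t) ∉ Tset a b := by
          intro ⟨h1', h2', h3'⟩
          exact hs ⟨h1', le_trans h2' h3'⟩
        rw [hf, Set.indicator_of_notMem this]
      rw [he, Set.indicator_of_notMem hs, integral_zero]
  rw [integral_congr_ae (Filter.Eventually.of_forall hinner)]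
  rw [integral_indicator measurableSet_Icc]
  rw [Measure.restrict_restrict measurableSet_Icc]
  have : Set.Icc a b ∩ Set.Icc 0 1 = Set.Icc a b :=
    Set.inter_eq_left.2 (Set.Icc_subset_Icc h0 hb1)
  rw [this, MeasureTheory.integral_Icc_eq_integral_Ioc, ← intervalIntegral.integral_of_le hab]
  have : (fun s : ℝ => (b - s)^5 / 5) = fun s => (fun x : ℝ => x^5/5) (b - s) := rfl
  rw [this, intervalIntegral.integral_comp_sub_left (fun x : ℝ => x^5/5) b]
  simp only [sub_self, sub_sub_cancel]
  rw [intervalIntegral.integral_div, integral_pow]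
  norm_num; ring

def Gset (n : ℕ) (u : Fin n → ℝ) : Set (ℝ × ℝ) :=
  {z | z.1 ≤ z.2 ∧ ∀ j, u j ∉ Set.Ioo z.1 z.2}

lemma Gset_meas (n : ℕ) (u : Fin n → ℝ) : MeasurableSet (Gset n u) := by
  have : Gset n u = {z : ℝ × ℝ | z.1 ≤ z.2} ∩
      ⋂ j : Fin n, ({z : ℝ × ℝ | u j ≤ z.1} ∪ {z | z.2 ≤ u j}) := by
    ext z
    simp only [Gset, Set.mem_setOf_eq, Set.mem_inter_iff, Set.mem_iInter, Set.mem_union,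
      Set.mem_Ioo, not_and, Set.mem_setOf_eq]
    constructor
    · rintro ⟨h1, h2⟩
      refine ⟨h1, fun j => ?_⟩
      rcases le_or_gt (u j) z.1 with h | h
      · exact Or.inl h
      · exact Or.inr (le_of_not_gt (h2 j h))
    · rintro ⟨h1, h2⟩
      refine ⟨h1, fun j hj => ?_⟩
      rcases h2 j with h | h
      · exact absurd hj (not_lt.2 h)
      · exact not_lt.2 h
  rw [this]
  exact (measurableSet_le measurable_fst measurable_snd).inter
    (MeasurableSet.iInter fun j =>
      (measurableSet_le measurable_const measurable_fst).union
        (measurableSet_le measurable_snd measurable_const))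

lemma sum_pointwise {n : ℕ} {u : Fin n → ℝ} (hu : ∀ i, u i ∈ Set.Icc (0:ℝ) 1) (z : ℝ × ℝ) :
    ∑ i : Fin (n+1), (Tset (qisPoints n u i.castSucc) (qisPoints n u i.succ)).indicator
        (fun z : ℝ × ℝ => (z.2 - z.1)^4) z
      ≤ (Gset n u).indicator (fun z : ℝ × ℝ => (z.2 - z.1)^4) z := by
  set p := qisPoints n u with hp
  have hmono : Monotone p := qis_mono hu
  have Tsub : ∀ i : Fin (n+1), Tset (p i.castSucc) (p i.succ) ⊆ Gset n u := by
    intro i z hz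
    obtain ⟨h1, h2, h3⟩ := hz
    refine ⟨h2, fun j hj => ?_⟩
    obtain ⟨k, hk⟩ := qis_sample_mem (u := u) j
    rcases le_or_gt ((Fin.castSucc k).succ) i.castSucc with h | h
    · have : u j ≤ z.1 := le_trans (hk ▸ hmono h) h1
      exact absurd hj.1 (not_lt.2 this)
    · have h' : i.succ ≤ (Fin.castSucc k).succ := by
        have hx : (i.castSucc : ℕ) < ((Fin.castSucc k).succ : ℕ) := h
        simp only [Fin.val_succ, Fin.coe_castSucc] at hx
        simp only [Fin.le_def, Fin.val_succ, Fin.coe_castSucc]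
        omega
      have : z.2 ≤ u j := le_trans h3 (hk ▸ hmono h')
      exact absurd hj.2 (not_lt.2 this)
  by_cases hex : ∃ i : Fin (n+1), z ∈ Tset (p i.castSucc) (p i.succ) ∧ z.1 < z.2
  · obtain ⟨i₀, hi₀, hlt⟩ := hex
    rw [Finset.sum_eq_single i₀]
    · rw [Set.indicator_of_mem hi₀, Set.indicator_of_mem (Tsub i₀ hi₀)]
    · intro b _ hb
      apply Set.indicator_of_notMem
      intro hbmem
      rcases lt_or_gt_of_ne hb with hlt' | hlt'
      · -- b < i₀ : z.2 ≤ p b.succ ≤ p i₀.castSucc ≤ z.1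
        have hle : b.succ ≤ i₀.castSucc := by
          have hx : (b : ℕ) < (i₀ : ℕ) := hlt'
          rw [Fin.le_def, Fin.val_succ, Fin.coe_castSucc]
          omega
        have := le_trans hbmem.2.2 (le_trans (hmono hle) hi₀.1)
        exact absurd hlt (not_lt.2 this)
      · have hle : i₀.succ ≤ b.castSucc := by
          have hx : (i₀ : ℕ) < (b : ℕ) := hlt'
          simp only [Fin.le_def, Fin.val_succ, Fin.coe_castSucc]
          omega
        have := le_trans hi₀.2.2 (le_trans (hmono hle) hbmem.1)
        exact absurd hlt (not_lt.2 this)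
    · intro h; exact absurd (Finset.mem_univ i₀) h
  · push_neg at hex
    have hz : ∀ i : Fin (n+1),
        (Tset (p i.castSucc) (p i.succ)).indicator (fun z : ℝ × ℝ => (z.2 - z.1)^4) z = 0 := by
      intro i
      by_cases hmem : z ∈ Tset (p i.castSucc) (p i.succ)
      · rw [Set.indicator_of_mem hmem]
        have h1 : z.2 ≤ z.1 := hex i hmem
        have h2 : z.1 ≤ z.2 := hmem.2.1
        have : z.1 = z.2 := le_antisymm h2 h1
        rw [← this]; ring
      · exact Set.indicator_of_notMem hmem _
    rw [Finset.sum_eq_zero (fun i _ => hz i)]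
    exact Set.indicator_nonneg (fun z _ => by positivity) z

lemma sum_six {n : ℕ} {u : Fin n → ℝ} (hu : ∀ i, u i ∈ Set.Icc (0:ℝ) 1) :
    ∑ i : Fin (n+1), (qisPoints n u i.succ - qisPoints n u i.castSucc)^6
      ≤ 30 * ∫ z, (Gset n u).indicator (fun z : ℝ × ℝ => (z.2 - z.1)^4) z ∂(pi01.prod pi01) := by
  set p := qisPoints n u with hp
  have hmono : Monotone p := qis_mono hu
  have hmem := qis_mem hu
  have hterm : ∀ i : Fin (n+1), (p i.succ - p i.castSucc)^6 / 30
      = ∫ z, (Tset (p i.castSucc) (p i.succ)).indicator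
          (fun z : ℝ × ℝ => (z.2 - z.1)^4) z ∂(pi01.prod pi01) := by
    intro i
    rw [block_integral (hmem _).1 (hmono (Fin.castSucc_lt_succ (i := i)).le) (hmem _).2]
  have hTi : ∀ i : Fin (n+1), Integrable ((Tset (p i.castSucc) (p i.succ)).indicator
      (fun z : ℝ × ℝ => (z.2 - z.1)^4)) (pi01.prod pi01) := by
    intro i
    refine (integrable_const (1:ℝ)).mono'
      (((measurable_snd.sub measurable_fst).pow_const 4).indicator (Tset_meas _ _)).aestronglyMeasurable ?_
    apply Filter.Eventually.of_forall
    intro z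
    rw [Real.norm_eq_abs]
    by_cases hz : z ∈ Tset (p i.castSucc) (p i.succ)
    · rw [Set.indicator_of_mem hz]
      obtain ⟨h1, h2, h3⟩ := hz
      have ha := (hmem i.castSucc).1
      have hb := (hmem i.succ).2
      rw [abs_of_nonneg (by positivity)]
      have h4 : z.2 - z.1 ≤ 1 := by linarith
      have h5 : 0 ≤ z.2 - z.1 := by linarith
      calc (z.2-z.1)^4 ≤ 1^4 := pow_le_pow_left₀ h5 h4 4
        _ = 1 := one_pow 4
    · rw [Set.indicator_of_notMem hz]; norm_num
  have hGi : Integrable ((Gset n u).indicator (fun z : ℝ × ℝ => (z.2 - z.1)^4)) (pi01.prod pi01) := by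
    refine (integrable_const (1:ℝ)).mono'
      (((measurable_snd.sub measurable_fst).pow_const 4).indicator (Gset_meas n u)).aestronglyMeasurable ?_
    have hae : ∀ᵐ z ∂(pi01.prod pi01), z ∈ (Set.Icc (0:ℝ) 1) ×ˢ (Set.Icc (0:ℝ) 1) := by
      rw [Measure.prod_restrict]
      exact ae_restrict_mem (measurableSet_Icc.prod measurableSet_Icc)
    filter_upwards [hae] with z hz
    rw [Real.norm_eq_abs]
    by_cases hg : z ∈ Gset n u
    · rw [Set.indicator_of_mem hg]
      obtain ⟨⟨h1, h2⟩, h3, h4⟩ := hz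
      rw [abs_of_nonneg (by positivity)]
      have h5 : z.2 - z.1 ≤ 1 := by linarith
      have h7 : -1 ≤ z.2 - z.1 := by linarith
      have h8 : (z.2 - z.1)^2 ≤ 1 := by nlinarith
      calc (z.2-z.1)^4 = ((z.2-z.1)^2)^2 := by ring
        _ ≤ 1 := by nlinarith [sq_nonneg (z.2 - z.1)]
    · rw [Set.indicator_of_notMem hg]; norm_num
  have e1 : ∑ i : Fin (n+1), (p i.succ - p i.castSucc)^6
      = 30 * ∑ i : Fin (n+1), ∫ z, (Tset (p i.castSucc) (p i.succ)).indicator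
          (fun z : ℝ × ℝ => (z.2 - z.1)^4) z ∂(pi01.prod pi01) := by
    rw [← Finset.sum_congr rfl (fun i _ => hterm i), Finset.mul_sum]
    apply Finset.sum_congr rfl
    intro i _; ring
  rw [e1]
  have e2 : ∑ i : Fin (n+1), ∫ z, (Tset (p i.castSucc) (p i.succ)).indicator
        (fun z : ℝ × ℝ => (z.2 - z.1)^4) z ∂(pi01.prod pi01)
      = ∫ z, ∑ i : Fin (n+1), (Tset (p i.castSucc) (p i.succ)).indicator
          (fun z : ℝ × ℝ => (z.2 - z.1)^4) z ∂(pi01.prod pi01) := by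
    rw [integral_finset_sum _ (fun i _ => hTi i)]
  rw [e2]
  have := integral_mono (integrable_finset_sum Finset.univ (fun i _ => hTi i)) hGi
    (fun z => sum_pointwise hu z)
  linarith


lemma exp_int {c : ℝ} (hc : 0 < c) :
    ∫ x in (0:ℝ)..1, x^4 * Real.exp (-c*x) ≤ 24 / c^5 := by
  have hcne : c ≠ 0 := ne_of_gt hc
  set P : ℝ → ℝ := fun x => x^4/c + 4*x^3/c^2 + 12*x^2/c^3 + 24*x/c^4 + 24/c^5 with hP
  set F : ℝ → ℝ := fun x => -(Real.exp (-c*x)) * P x with hF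
  have hFd : ∀ x, HasDerivAt F (x^4 * Real.exp (-c*x)) x := by
    intro x
    have hlin : HasDerivAt (fun x : ℝ => -c*x) (-c) x := by
      simpa using (hasDerivAt_id x).const_mul (-c)
    have he : HasDerivAt (fun x => Real.exp (-c*x)) (Real.exp (-c*x) * (-c)) x := hlin.exp
    have hp : HasDerivAt P (4*x^3/c + 12*x^2/c^2 + 24*x/c^3 + 24/c^4) x := by
      have h1 : HasDerivAt (fun x : ℝ => x^4/c) (4*x^3/c) x := by
        simpa using (hasDerivAt_pow 4 x).div_const c
      have h2 : HasDerivAt (fun x : ℝ => 4*x^3/c^2) (12*x^2/c^2) x := by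
        have := ((hasDerivAt_pow 3 x).const_mul 4).div_const (c^2)
        simpa using this.congr_deriv (by ring)
      have h3 : HasDerivAt (fun x : ℝ => 12*x^2/c^3) (24*x/c^3) x := by
        have := ((hasDerivAt_pow 2 x).const_mul 12).div_const (c^3)
        simpa using this.congr_deriv (by ring)
      have h4 : HasDerivAt (fun x : ℝ => 24*x/c^4) (24/c^4) x := by
        have := ((hasDerivAt_id x).const_mul 24).div_const (c^4)
        simpa using this.congr_deriv (by ring)
      have h5 : HasDerivAt (fun _ : ℝ => 24/c^5) 0 x := hasDerivAt_const x _
      have := (((h1.fun_add h2).fun_add h3).fun_add h4).fun_add h5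
      rw [add_zero] at this; exact this
    have hprod := (he.neg.mul hp)
    apply hprod.congr_deriv
    simp only [hP, Pi.neg_apply]
    field_simp
    ring
  have hcont : Continuous fun x : ℝ => x^4 * Real.exp (-c*x) := by
    exact (continuous_pow 4).mul ((continuous_const.mul continuous_id).rexp)
  rw [intervalIntegral.integral_eq_sub_of_hasDerivAt (fun x _ => hFd x)
    (hcont.intervalIntegrable 0 1)]
  have hF0 : F 0 = -(24/c^5) := by simp [hF, hP]
  have hF1 : F 1 ≤ 0 := by
    simp only [hF, hP]
    have : (0:ℝ) ≤ Real.exp (-c*1) * (1^4/c + 4*1^3/c^2 + 12*1^2/c^3 + 24*1/c^4 + 24/c^5) := by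
      positivity
    nlinarith [this]
  rw [hF0]
  linarith [hF1]

lemma poly_int_bound (n : ℕ) (hn : 1 ≤ n) :
    ∫ x in (0:ℝ)..1, x^4 * (1-x)^n ≤ 24 / (n:ℝ)^5 := by
  have hn0 : (0:ℝ) < n := by exact_mod_cast hn
  have hmono : ∀ x ∈ Set.Icc (0:ℝ) 1, x^4 * (1-x)^n ≤ x^4 * Real.exp (-(n:ℝ)*x) := by
    intro x hx
    apply mul_le_mul_of_nonneg_left _ (by positivity)
    have h1 : 1 - x ≤ Real.exp (-x) := by
      have := Real.add_one_le_exp (-x)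
      linarith
    have h2 : (1-x)^n ≤ Real.exp (-x)^n :=
      pow_le_pow_left₀ (by linarith [hx.2]) h1 n
    calc (1-x)^n ≤ Real.exp (-x)^n := h2
      _ = Real.exp (-(n:ℝ)*x) := by
          rw [← Real.exp_nat_mul]; ring_nf
  have hi1 : IntervalIntegrable (fun x : ℝ => x^4 * (1-x)^n) volume 0 1 :=
    ((continuous_pow 4).mul ((continuous_const.sub continuous_id).pow n)).intervalIntegrable 0 1
  have hi2 : IntervalIntegrable (fun x : ℝ => x^4 * Real.exp (-(n:ℝ)*x)) volume 0 1 :=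
    ((continuous_pow 4).mul ((continuous_const.mul continuous_id).rexp)).intervalIntegrable 0 1
  calc ∫ x in (0:ℝ)..1, x^4 * (1-x)^n
      ≤ ∫ x in (0:ℝ)..1, x^4 * Real.exp (-(n:ℝ)*x) := by
        apply intervalIntegral.integral_mono_on (by norm_num) hi1 hi2
        intro x hx; exact hmono x hx
    _ ≤ 24 / (n:ℝ)^5 := exp_int hn0

variable {Ω : Type*} [MeasurableSpace Ω] (μ : Measure Ω) [IsProbabilityMeasure μ]
  (U : ℕ → Ω → ℝ)

lemma prob_no_point (hmeas : ∀ i, Measurable (U i))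
    (hindep : iIndepFun U μ)
    (hunif : ∀ i, Measure.map (U i) μ = volume.restrict (Set.Icc (0 : ℝ) 1))
    (n : ℕ) {s t : ℝ} (h0 : 0 ≤ s) (hst : s ≤ t) (ht : t ≤ 1) :
    μ {ω | ∀ j : Fin n, U j ω ∉ Set.Ioo s t} = ENNReal.ofReal ((1-(t-s))^n) := by
  have hset : {ω | ∀ j : Fin n, U j ω ∉ Set.Ioo s t}
      = ⋂ j ∈ Finset.range n, U j ⁻¹' (Set.Ioo s t)ᶜ := by
    ext ω
    simp only [Set.mem_setOf_eq, Set.mem_iInter, Finset.mem_range, Set.mem_preimage,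
      Set.mem_compl_iff]
    exact ⟨fun h j hj => h ⟨j, hj⟩, fun h j => h j j.2⟩
  rw [hset, hindep.meas_biInter (fun j _ => ⟨(Set.Ioo s t)ᶜ, measurableSet_Ioo.compl, rfl⟩)]
  have hfac : ∀ j, μ (U j ⁻¹' (Set.Ioo s t)ᶜ) = ENNReal.ofReal (1-(t-s)) := by
    intro j
    rw [← Measure.map_apply (hmeas j) measurableSet_Ioo.compl, hunif j]
    rw [measure_compl measurableSet_Ioo (measure_ne_top _ _)]
    have h1 : (volume.restrict (Set.Icc (0:ℝ) 1)) Set.univ = 1 := measure_univ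
    have h2 : (volume.restrict (Set.Icc (0:ℝ) 1)) (Set.Ioo s t) = ENNReal.ofReal (t - s) := by
      rw [Measure.restrict_apply measurableSet_Ioo,
        Set.inter_eq_left.2 (Set.Ioo_subset_Icc_self.trans (Set.Icc_subset_Icc h0 ht)),
        Real.volume_Ioo]
    rw [h1, h2, ENNReal.ofReal_sub 1 (sub_nonneg.2 hst), ENNReal.ofReal_one]
  rw [Finset.prod_congr rfl (fun j _ => hfac j), Finset.prod_const, Finset.card_range,
    ← ENNReal.ofReal_pow (by linarith)]

noncomputable def bigF (n : ℕ) : Ω × (ℝ × ℝ) → ℝ :=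
  fun p => (Gset n (fun j : Fin n => U j p.1)).indicator (fun z => (z.2 - z.1)^4) p.2

lemma bigF_eq_indicator (n : ℕ) :
    bigF U n = Set.indicator
      ({p : Ω × (ℝ × ℝ) | p.2.1 ≤ p.2.2} ∩
        ⋂ j : Fin n, ({p : Ω × (ℝ × ℝ) | U j p.1 ≤ p.2.1} ∪ {p | p.2.2 ≤ U j p.1}))
      (fun p => (p.2.2 - p.2.1)^4) := by
  funext p
  have hiff : p.2 ∈ Gset n (fun j : Fin n => U j p.1) ↔
      p ∈ ({p : Ω × (ℝ × ℝ) | p.2.1 ≤ p.2.2} ∩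
        ⋂ j : Fin n, ({p : Ω × (ℝ × ℝ) | U j p.1 ≤ p.2.1} ∪ {p | p.2.2 ≤ U j p.1})) := by
    simp only [Gset, Set.mem_setOf_eq, Set.mem_inter_iff, Set.mem_iInter, Set.mem_union,
      Set.mem_Ioo, Set.mem_setOf_eq]
    constructor
    · rintro ⟨h1, h2⟩
      refine ⟨h1, fun j => ?_⟩
      rcases le_or_gt (U j p.1) p.2.1 with h | h
      · exact Or.inl h
      · exact Or.inr (le_of_not_gt (fun hlt => h2 j ⟨h, hlt⟩))
    · rintro ⟨h1, h2⟩
      refine ⟨h1, fun j hj => ?_⟩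
      rcases h2 j with h | h
      · exact absurd hj.1 (not_lt.2 h)
      · exact absurd hj.2 (not_lt.2 h)
  by_cases hp : p.2 ∈ Gset n (fun j : Fin n => U j p.1)
  · rw [bigF, Set.indicator_of_mem hp, Set.indicator_of_mem (hiff.1 hp)]
  · rw [bigF, Set.indicator_of_notMem hp, Set.indicator_of_notMem (fun h => hp (hiff.2 h))]

lemma bigF_meas (hmeas : ∀ i, Measurable (U i)) (n : ℕ) : Measurable (bigF U n) := by
  rw [bigF_eq_indicator]
  apply Measurable.indicator
  · exact ((measurable_snd.snd.sub measurable_snd.fst).pow_const 4)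
  · refine (measurableSet_le measurable_snd.fst measurable_snd.snd).inter
      (MeasurableSet.iInter fun j => ?_)
    exact (measurableSet_le ((hmeas j).comp measurable_fst) measurable_snd.fst).union
      (measurableSet_le measurable_snd.snd ((hmeas j).comp measurable_fst))

lemma bigF_int (hmeas : ∀ i, Measurable (U i)) (n : ℕ) :
    Integrable (bigF U n) (μ.prod (pi01.prod pi01)) := by
  refine (integrable_const (1:ℝ)).mono' (bigF_meas U hmeas n).aestronglyMeasurable ?_
  have hnull : (μ.prod (pi01.prod pi01))
      (Set.univ ×ˢ ((Set.Icc (0:ℝ) 1 ×ˢ Set.Icc (0:ℝ) 1)ᶜ)) = 0 := by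
    rw [Measure.prod_prod]
    have : (pi01.prod pi01) ((Set.Icc (0:ℝ) 1 ×ˢ Set.Icc (0:ℝ) 1)ᶜ) = 0 := by
      rw [Measure.prod_restrict, Measure.restrict_apply (measurableSet_Icc.prod measurableSet_Icc).compl]
      simp
    rw [this, mul_zero]
  have hae : ∀ᵐ p ∂(μ.prod (pi01.prod pi01)),
      p.2 ∈ Set.Icc (0:ℝ) 1 ×ˢ Set.Icc (0:ℝ) 1 := by
    rw [MeasureTheory.ae_iff]
    apply measure_mono_null _ hnull
    intro p hp
    simp only [Set.mem_setOf_eq] at hp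
    exact ⟨Set.mem_univ _, hp⟩
  filter_upwards [hae] with p hp
  obtain ⟨⟨h1, h2⟩, h3, h4⟩ : (0 ≤ p.2.1 ∧ p.2.1 ≤ 1) ∧ (0 ≤ p.2.2 ∧ p.2.2 ≤ 1) := hp
  rw [Real.norm_eq_abs]
  by_cases hg : p.2 ∈ Gset n (fun j : Fin n => U j p.1)
  · rw [bigF, Set.indicator_of_mem hg]
    have h5 : p.2.1 ≤ p.2.2 := hg.1
    rw [abs_of_nonneg (by positivity)]
    have h6 : p.2.2 - p.2.1 ≤ 1 := by linarith
    have h7 : 0 ≤ p.2.2 - p.2.1 := by linarith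
    calc (p.2.2-p.2.1)^4 ≤ 1^4 := pow_le_pow_left₀ h7 h6 4
      _ = 1 := one_pow 4
  · rw [bigF, Set.indicator_of_notMem hg]; norm_num

lemma bigF_expectation (hmeas : ∀ i, Measurable (U i))
    (hindep : iIndepFun U μ)
    (hunif : ∀ i, Measure.map (U i) μ = volume.restrict (Set.Icc (0 : ℝ) 1))
    (n : ℕ) (hn : 1 ≤ n) :
    ∫ ω, (∫ z, bigF U n (ω, z) ∂(pi01.prod pi01)) ∂μ ≤ 24 / (n:ℝ)^5 := by
  set P2 : Measure (ℝ × ℝ) := pi01.prod pi01 with hP2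
  have huncurry : Function.uncurry (fun ω z => bigF U n (ω, z)) = bigF U n := by
    funext p; rfl
  have hswap := MeasureTheory.integral_integral_swap
    (f := fun ω z => bigF U n (ω, z)) (μ := μ) (ν := P2)
    (by rw [huncurry]; exact bigF_int μ U hmeas n)
  rw [hswap]
  -- the inner Ω-integral equals g a.e.
  set g : ℝ × ℝ → ℝ := Set.indicator {z : ℝ × ℝ | z.1 ≤ z.2}
    (fun z => (z.2 - z.1)^4 * (1-(z.2-z.1))^n) with hg
  have hgmeas : Measurable g :=
    (((measurable_snd.sub measurable_fst).pow_const 4).mul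
      ((measurable_const.sub (measurable_snd.sub measurable_fst)).pow_const n)).indicator
      (measurableSet_le measurable_fst measurable_snd)
  have haeP2 : ∀ᵐ z ∂P2, z ∈ Set.Icc (0:ℝ) 1 ×ˢ Set.Icc (0:ℝ) 1 := by
    rw [hP2, Measure.prod_restrict]
    exact ae_restrict_mem (measurableSet_Icc.prod measurableSet_Icc)
  have hAz : ∀ z : ℝ × ℝ, MeasurableSet {ω | ∀ j : Fin n, U j ω ∉ Set.Ioo z.1 z.2} := by
    intro z
    have : {ω | ∀ j : Fin n, U j ω ∉ Set.Ioo z.1 z.2}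
        = ⋂ j : Fin n, (U j ⁻¹' (Set.Ioo z.1 z.2)ᶜ) := by
      ext ω; simp [Set.mem_iInter]
    rw [this]
    exact MeasurableSet.iInter fun j => (hmeas j) measurableSet_Ioo.compl
  have hinner : ∀ᵐ z ∂P2, (∫ ω, bigF U n (ω, z) ∂μ) = g z := by
    filter_upwards [haeP2] with z hz
    obtain ⟨⟨h1, h2⟩, h3, h4⟩ : (0 ≤ z.1 ∧ z.1 ≤ 1) ∧ (0 ≤ z.2 ∧ z.2 ≤ 1) := hz
    by_cases h12 : z.1 ≤ z.2
    · have he : (fun ω => bigF U n (ω, z))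
          = ({ω | ∀ j : Fin n, U j ω ∉ Set.Ioo z.1 z.2}).indicator
              (fun _ => (z.2 - z.1)^4) := by
        funext ω
        by_cases hA : ω ∈ {ω | ∀ j : Fin n, U j ω ∉ Set.Ioo z.1 z.2}
        · rw [Set.indicator_of_mem hA]
          have : z ∈ Gset n (fun j : Fin n => U j ω) := ⟨h12, hA⟩
          rw [bigF, Set.indicator_of_mem this]
        · rw [Set.indicator_of_notMem hA]
          have : z ∉ Gset n (fun j : Fin n => U j ω) := fun hc => hA hc.2
          rw [bigF, Set.indicator_of_notMem this]
      rw [he, integral_indicator_const _ (hAz z)]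
      rw [measureReal_def, prob_no_point μ U hmeas hindep hunif n h1 h12 h4]
      rw [ENNReal.toReal_ofReal (pow_nonneg (by linarith) n)]
      rw [hg, Set.indicator_of_mem (show z ∈ {z : ℝ × ℝ | z.1 ≤ z.2} from h12), smul_eq_mul]
      ring
    · have he : (fun ω => bigF U n (ω, z)) = fun _ => (0:ℝ) := by
        funext ω
        have : z ∉ Gset n (fun j : Fin n => U j ω) := fun hc => h12 hc.1
        rw [bigF, Set.indicator_of_notMem this]
      rw [he, integral_zero, hg, Set.indicator_of_notMem (show z ∉ {z : ℝ × ℝ | z.1 ≤ z.2} from h12)]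
  rw [integral_congr_ae hinner]
  -- now bound ∫ g ∂P2
  have hgint : Integrable g P2 := by
    refine (integrable_const (1:ℝ)).mono' hgmeas.aestronglyMeasurable ?_
    filter_upwards [haeP2] with z hz
    obtain ⟨⟨h1, h2⟩, h3, h4⟩ : (0 ≤ z.1 ∧ z.1 ≤ 1) ∧ (0 ≤ z.2 ∧ z.2 ≤ 1) := hz
    rw [Real.norm_eq_abs]
    by_cases h12 : z.1 ≤ z.2
    · rw [hg, Set.indicator_of_mem (show z ∈ {z : ℝ × ℝ | z.1 ≤ z.2} from h12)]
      have h5 : 0 ≤ z.2 - z.1 := by linarith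
      have h6 : z.2 - z.1 ≤ 1 := by linarith
      rw [abs_of_nonneg (mul_nonneg (by positivity) (pow_nonneg (by linarith) n))]
      calc (z.2-z.1)^4 * (1-(z.2-z.1))^n ≤ 1 * 1 := by
            apply mul_le_mul
            · calc (z.2-z.1)^4 ≤ 1^4 := pow_le_pow_left₀ h5 h6 4
                _ = 1 := one_pow 4
            · calc (1-(z.2-z.1))^n ≤ 1^n := pow_le_pow_left₀ (by linarith) (by linarith) n
                _ = 1 := one_pow n
            · exact pow_nonneg (by linarith) n
            · norm_num
        _ = 1 := one_mul 1
    · rw [hg, Set.indicator_of_notMem (show z ∉ {z : ℝ × ℝ | z.1 ≤ z.2} from h12)]; norm_num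
  rw [hP2, MeasureTheory.integral_prod g (hP2 ▸ hgint)]
  -- inner integral over t
  have hinner2 : ∀ x ∈ Set.Icc (0:ℝ) 1, (∫ y, g (x, y) ∂pi01) ≤ 24 / (n:ℝ)^5 := by
    intro x hx
    have he : (fun y => g (x, y))
        = Set.indicator (Set.Ici x) (fun y => (y - x)^4 * (1-(y-x))^n) := by
      funext y
      by_cases hxy : x ≤ y
      · rw [Set.indicator_of_mem (Set.mem_Ici.2 hxy), hg,
          Set.indicator_of_mem (show (x,y) ∈ {z : ℝ × ℝ | z.1 ≤ z.2} from hxy)]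
      · rw [Set.indicator_of_notMem (fun h => hxy (Set.mem_Ici.1 h)), hg,
          Set.indicator_of_notMem (show (x,y) ∉ {z : ℝ × ℝ | z.1 ≤ z.2} from hxy)]
    rw [he, integral_indicator measurableSet_Ici, Measure.restrict_restrict measurableSet_Ici]
    have hset2 : Set.Ici x ∩ Set.Icc (0:ℝ) 1 = Set.Icc x 1 := by
      ext y
      constructor
      · rintro ⟨hy1, hy2, hy3⟩; exact ⟨hy1, hy3⟩
      · rintro ⟨hy1, hy2⟩; exact ⟨hy1, le_trans hx.1 hy1, hy2⟩
    rw [hset2, MeasureTheory.integral_Icc_eq_integral_Ioc,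
      ← intervalIntegral.integral_of_le hx.2]
    rw [intervalIntegral.integral_comp_sub_right (fun w => w^4 * (1-w)^n) x, sub_self]
    have hcont : Continuous fun w : ℝ => w^4 * (1-w)^n :=
      (continuous_pow 4).mul ((continuous_const.sub continuous_id).pow n)
    have hsplit : ∫ w in (0:ℝ)..1, w^4 * (1-w)^n
        = (∫ w in (0:ℝ)..(1-x), w^4 * (1-w)^n) + ∫ w in (1-x)..1, w^4 * (1-w)^n :=
      (intervalIntegral.integral_add_adjacent_intervals
        (hcont.intervalIntegrable _ _) (hcont.intervalIntegrable _ _)).symm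
    have hnonneg : 0 ≤ ∫ w in (1-x)..1, w^4 * (1-w)^n := by
      apply intervalIntegral.integral_nonneg (by linarith [hx.1])
      intro w hw
      have : 1 - w ≥ 0 := by linarith [hw.2]
      positivity
    have := poly_int_bound n hn
    linarith [hsplit, hnonneg, this]
  have hinteg : Integrable (fun x => ∫ y, g (x, y) ∂pi01) pi01 :=
    (hP2 ▸ hgint).integral_prod_left
  calc ∫ x, (∫ y, g (x, y) ∂pi01) ∂pi01
      ≤ ∫ _, 24 / (n:ℝ)^5 ∂pi01 := by
        apply integral_mono_ae hinteg (integrable_const _)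
        filter_upwards [ae_restrict_mem measurableSet_Icc] with x hx
        exact hinner2 x hx
    _ = 24 / (n:ℝ)^5 := by
        rw [integral_const]
        simp [measure_univ]

end Aux

/-- **`O(n⁻⁴)` mean squared error of quantile importance sampling.** -/
theorem qis_mse_bound
    {Ω : Type*} [MeasurableSpace Ω] (μ : Measure Ω) [IsProbabilityMeasure μ]
    (U : ℕ → Ω → ℝ) (hmeas : ∀ i, Measurable (U i))
    (hindep : iIndepFun U μ)
    (hunif : ∀ i, Measure.map (U i) μ = volume.restrict (Set.Icc (0 : ℝ) 1))
    (Λ Λ' Λ'' : ℝ → ℝ)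
    (hd1 : ∀ s ∈ Set.Icc (0 : ℝ) 1, HasDerivWithinAt Λ (Λ' s) (Set.Icc 0 1) s)
    (hc1 : ContinuousOn Λ' (Set.Icc 0 1))
    (hd2 : ∀ s ∈ Set.Icc (0 : ℝ) 1, HasDerivWithinAt Λ' (Λ'' s) (Set.Icc 0 1) s)
    (hb2 : ∃ C : ℝ, ∀ s ∈ Set.Icc (0 : ℝ) 1, |Λ'' s| ≤ C) :
    ∃ M > (0 : ℝ), ∀ n : ℕ, 1 ≤ n →
      (∫ ω, ((∫ s in (0 : ℝ)..1, Λ s)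
          - qisEstimate Λ n (fun i : Fin n => U i.val ω)) ^ 2 ∂μ)
        ≤ M / (n : ℝ) ^ 4 := by
  obtain ⟨C, hC⟩ := hb2
  have hC0 : 0 ≤ C := le_trans (abs_nonneg _) (hC 0 (by norm_num))
  refine ⟨5760 * C^2 + 1, by positivity, ?_⟩
  intro n hn
  have hn1 : (1:ℝ) ≤ (n:ℝ) := by exact_mod_cast hn
  have hnpos : (0:ℝ) < (n:ℝ) := by linarith
  -- a.e. the sample lies in [0,1]
  have huae : ∀ᵐ ω ∂μ, ∀ j : Fin n, U j.val ω ∈ Set.Icc (0:ℝ) 1 := by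
    rw [MeasureTheory.ae_all_iff]
    intro j
    rw [MeasureTheory.ae_iff]
    have hset : {ω | ¬ U j.val ω ∈ Set.Icc (0:ℝ) 1}
        = U j.val ⁻¹' (Set.Icc (0:ℝ) 1)ᶜ := rfl
    rw [hset, ← Measure.map_apply (hmeas j.val) measurableSet_Icc.compl, hunif j.val,
      Measure.restrict_apply measurableSet_Icc.compl]
    simp
  -- pointwise (a.e.) bound of the squared error by the bigF integral
  have hmain : ∀ᵐ ω ∂μ, ((∫ s in (0 : ℝ)..1, Λ s)
        - qisEstimate Λ n (fun i : Fin n => U i.val ω)) ^ 2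
      ≤ (120 * C^2 * ((n:ℝ)+1)) * ∫ z, bigF U n (ω, z) ∂(pi01.prod pi01) := by
    filter_upwards [huae] with ω hu
    set u : Fin n → ℝ := fun i : Fin n => U i.val ω with hudef
    have habs := det_bound (u := u) Λ Λ' Λ'' hd1 hd2 hC hu
      (fun ha hb hab => trap_err Λ Λ' Λ'' hd1 hd2 hC ha hb hab)
    set S3 : ℝ := ∑ i : Fin (n+1), (qisPoints n u i.succ - qisPoints n u i.castSucc) ^ 3
      with hS3def
    have hmono := qis_mono hu
    have hS3nn : 0 ≤ S3 := by
      apply Finset.sum_nonneg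
      intro i _
      have := hmono (Fin.castSucc_lt_succ (i := i)).le
      exact pow_nonneg (sub_nonneg.2 this) 3
    have hsq : ((∫ s in (0 : ℝ)..1, Λ s) - qisEstimate Λ n u) ^ 2 ≤ (2*C*S3)^2 := by
      rw [← sq_abs]
      apply pow_le_pow_left₀ (abs_nonneg _) habs
    have hcs : S3^2 ≤ ((n:ℝ)+1) * ∑ i : Fin (n+1),
        (qisPoints n u i.succ - qisPoints n u i.castSucc) ^ 6 := by
      have h := sq_sum_le_card_mul_sum_sq
        (s := (Finset.univ : Finset (Fin (n+1))))
        (f := fun i => (qisPoints n u i.succ - qisPoints n u i.castSucc) ^ 3)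
      have hcard : ((Finset.univ : Finset (Fin (n+1))).card : ℝ) = (n:ℝ)+1 := by
        simp
      have he : ∑ i : Fin (n+1), ((qisPoints n u i.succ - qisPoints n u i.castSucc) ^ 3)^2
          = ∑ i : Fin (n+1), (qisPoints n u i.succ - qisPoints n u i.castSucc) ^ 6 := by
        apply Finset.sum_congr rfl; intro i _; ring
      rw [hS3def]
      calc (∑ i : Fin (n+1), (qisPoints n u i.succ - qisPoints n u i.castSucc) ^ 3)^2
          ≤ ((Finset.univ : Finset (Fin (n+1))).card : ℝ) * ∑ i : Fin (n+1),
            ((qisPoints n u i.succ - qisPoints n u i.castSucc) ^ 3)^2 := h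
        _ = ((n:ℝ)+1) * ∑ i : Fin (n+1),
            (qisPoints n u i.succ - qisPoints n u i.castSucc) ^ 6 := by rw [hcard, he]
    have hs6 := sum_six hu
    have hbigF : (fun z => bigF U n (ω, z))
        = (Gset n u).indicator (fun z : ℝ × ℝ => (z.2 - z.1)^4) := rfl
    calc ((∫ s in (0 : ℝ)..1, Λ s) - qisEstimate Λ n u) ^ 2
        ≤ (2*C*S3)^2 := hsq
      _ = 4*C^2 * S3^2 := by ring
      _ ≤ 4*C^2 * (((n:ℝ)+1) * ∑ i : Fin (n+1),
            (qisPoints n u i.succ - qisPoints n u i.castSucc) ^ 6) := by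
          apply mul_le_mul_of_nonneg_left hcs (by positivity)
      _ ≤ 4*C^2 * (((n:ℝ)+1) * (30 * ∫ z, (Gset n u).indicator
            (fun z : ℝ × ℝ => (z.2 - z.1)^4) z ∂(pi01.prod pi01))) := by
          apply mul_le_mul_of_nonneg_left _ (by positivity)
          apply mul_le_mul_of_nonneg_left hs6 (by positivity)
      _ = (120 * C^2 * ((n:ℝ)+1)) * ∫ z, bigF U n (ω, z) ∂(pi01.prod pi01) := by
          rw [hbigF]; ring
  have hhint : Integrable (fun ω => ∫ z, bigF U n (ω, z) ∂(pi01.prod pi01)) μ :=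
    (bigF_int μ U hmeas n).integral_prod_left
  have hle1 : (∫ ω, ((∫ s in (0 : ℝ)..1, Λ s)
        - qisEstimate Λ n (fun i : Fin n => U i.val ω)) ^ 2 ∂μ)
      ≤ ∫ ω, (120 * C^2 * ((n:ℝ)+1)) * (∫ z, bigF U n (ω, z) ∂(pi01.prod pi01)) ∂μ := by
    apply integral_mono_of_nonneg
    · exact Filter.Eventually.of_forall (fun ω => sq_nonneg _)
    · exact hhint.const_mul _
    · exact hmain
  have hle2 : ∫ ω, (120 * C^2 * ((n:ℝ)+1)) * (∫ z, bigF U n (ω, z) ∂(pi01.prod pi01)) ∂μ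
      ≤ (120 * C^2 * ((n:ℝ)+1)) * (24 / (n:ℝ)^5) := by
    rw [MeasureTheory.integral_const_mul]
    apply mul_le_mul_of_nonneg_left _ (by positivity)
    exact bigF_expectation μ U hmeas hindep hunif n hn
  have harith : (120 * C^2 * ((n:ℝ)+1)) * (24 / (n:ℝ)^5)
      ≤ (5760 * C^2 + 1) / (n:ℝ)^4 := by
    rw [show (120 * C^2 * ((n:ℝ)+1)) * (24 / (n:ℝ)^5)
      = (2880 * C^2 * ((n:ℝ)+1)) / (n:ℝ)^5 from by ring]
    rw [div_le_div_iff₀ (by positivity) (by positivity)]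
    have h2n : (n:ℝ) + 1 ≤ 2 * (n:ℝ) := by linarith
    have h5 : (n:ℝ)^5 = (n:ℝ)^4 * (n:ℝ) := by ring
    have hp4 : (0:ℝ) < (n:ℝ)^4 := by positivity
    nlinarith [mul_le_mul_of_nonneg_left h2n (by positivity : (0:ℝ) ≤ 2880 * C^2),
      mul_pos hp4 hnpos, sq_nonneg C, mul_nonneg (mul_nonneg (by norm_num : (0:ℝ) ≤ 2880) (sq_nonneg C)) (le_of_lt hp4)]
  calc (∫ ω, ((∫ s in (0 : ℝ)..1, Λ s)
        - qisEstimate Λ n (fun i : Fin n => U i.val ω)) ^ 2 ∂μ)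
      ≤ (120 * C^2 * ((n:ℝ)+1)) * (24 / (n:ℝ)^5) := le_trans hle1 hle2
    _ ≤ (5760 * C^2 + 1) / (n:ℝ)^4 := harith
end

section
/- Let (X_1, Y_1), ..., (X_n, Y_n) be i.i.d. integrable pairs from a distribution P, let X̃_1, ..., X̃_N be i.i.d. with the same marginal distribution as X_1 and independent of the labeled pairs, and let {I_1, ..., I_K} be a fixed partition of {1, ..., n} with n_k = |I_k| ≥ 1. For each k, let f^{(−k)} be a prediction function constructed measurably from the labeled pairs outside fold I_k only (so f^{(−k)} is independent of {(X_i, Y_i) : i ∈ I_k} and of the X̃_j), with E|f^{(−k)}(X)| < ∞. Then the cross-fitted PPI estimator θ̂_cross-PPI = (1/K) Σ_{k=1}^K [ (1/N) Σ_{j=1}^N f^{(−k)}(X̃_j) − (1/n_k) Σ_{i∈I_k} (f^{(−k)}(X_i) − Y_i) ] satisfies E[θ̂_cross-PPI] = E[Y]. -/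
open MeasureTheory ProbabilityTheory

/-- **Unbiasedness of cross-fitted prediction-powered inference (cross-PPI).**
The labeled data are `n` i.i.d. integrable pairs `Z i = (X i, Y i)`; the
unlabeled covariates `Xt j`, `j < N`, are i.i.d. copies of `X` independent of
the labeled pairs (joint independence of the whole family indexed by
`Fin n ⊕ Fin N`).  The folds `I k`, `k < K`, form a partition of `Fin n` into
nonempty sets.  For each fold `k`, the prediction rule `φ k` is built
measurably from the labeled data and depends only on the observations
*outside* fold `k`, and `f^{(−k)}(X)` is integrable (stated here for the
fresh covariate `Xt 0`, which is independent of the data building `φ k`).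
Then the cross-fitted PPI estimator
`θ̂ = (1/K) ∑ₖ [ (1/N) ∑ⱼ f^{(−k)}(X̃ j) − (1/n_k) ∑_{i ∈ I k} (f^{(−k)}(X i) − Y i) ]`
satisfies `E[θ̂] = E[Y]`. -/
theorem cross_ppi_unbiased
    {Ω α : Type*} [MeasurableSpace Ω] [MeasurableSpace α]
    (μ : Measure Ω) [IsProbabilityMeasure μ]
    (n N K : ℕ) (hn : 0 < n) (hN : 0 < N) (hK : 0 < K)
    (Z : Fin n → Ω → α × ℝ) (Xt : Fin N → Ω → α)
    (hZmeas : ∀ i, Measurable (Z i)) (hXtmeas : ∀ j, Measurable (Xt j))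
    (hindep : iIndepFun
      (Sum.elim Z (fun (j : Fin N) ω => (Xt j ω, (0 : ℝ)))) μ)
    (hident : ∀ i, Measure.map (Z i) μ = Measure.map (Z ⟨0, hn⟩) μ)
    (hidentX : ∀ j, Measure.map (Xt j) μ
      = Measure.map (fun ω => (Z ⟨0, hn⟩ ω).1) μ)
    (I : Fin K → Finset (Fin n))
    (hdisj : ∀ k k', k ≠ k' → Disjoint (I k) (I k'))
    (hcover : Finset.univ.biUnion I = Finset.univ)
    (hne : ∀ k, 1 ≤ (I k).card)
    (φ : Fin K → (Fin n → α × ℝ) → α → ℝ)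
    (hφmeas : ∀ k, Measurable (fun p : (Fin n → α × ℝ) × α => φ k p.1 p.2))
    (hout : ∀ k (d d' : Fin n → α × ℝ),
      (∀ i ∉ I k, d i = d' i) → φ k d = φ k d')
    (hYint : Integrable (fun ω => (Z ⟨0, hn⟩ ω).2) μ)
    (hfint : ∀ k,
      Integrable (fun ω => φ k (fun i => Z i ω) (Xt ⟨0, hN⟩ ω)) μ) :
    (∫ ω, (1 / (K : ℝ)) * ∑ k,
        ((1 / (N : ℝ)) * ∑ j, φ k (fun i => Z i ω) (Xt j ω)
          - (1 / ((I k).card : ℝ)) * ∑ i ∈ I k,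
              (φ k (fun i' => Z i' ω) ((Z i ω).1) - (Z i ω).2)) ∂μ)
      = ∫ ω, (Z ⟨0, hn⟩ ω).2 ∂μ := by
  classical
  have hΩ : Nonempty Ω := by
    by_contra h
    rw [not_nonempty_iff] at h
    have h1 : μ Set.univ = 1 := measure_univ
    rw [Set.univ_eq_empty_iff.mpr h] at h1
    simp at h1
  obtain ⟨ω₀⟩ := hΩ
  set z0 : α × ℝ := Z ⟨0, hn⟩ ω₀ with hz0
  set f : (Fin n ⊕ Fin N) → Ω → α × ℝ :=
    Sum.elim Z (fun (j : Fin N) ω => (Xt j ω, (0 : ℝ))) with hf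
  have hfmeas : ∀ s, Measurable (f s) := by
    rintro (i | j)
    · exact hZmeas i
    · exact (hXtmeas j).prodMk measurable_const
  -- identically distributed labels
  have hYint' : ∀ i : Fin n, Integrable (fun ω => (Z i ω).2) μ := by
    intro i
    have h1 : Integrable (fun p : α × ℝ => p.2) (Measure.map (Z ⟨0, hn⟩) μ) := by
      rw [integrable_map_measure measurable_snd.aestronglyMeasurable
        (hZmeas _).aemeasurable]
      exact hYint
    have h2 : Integrable (fun p : α × ℝ => p.2) (Measure.map (Z i) μ) := by
      rw [hident i]; exact h1
    rw [integrable_map_measure measurable_snd.aestronglyMeasurable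
      (hZmeas i).aemeasurable] at h2
    exact h2
  have hYeq : ∀ i : Fin n, ∫ ω, (Z i ω).2 ∂μ = ∫ ω, (Z ⟨0, hn⟩ ω).2 ∂μ := by
    intro i
    have e1 : ∫ ω, (Z i ω).2 ∂μ = ∫ p : α × ℝ, p.2 ∂(Measure.map (Z i) μ) :=
      (integral_map (hZmeas i).aemeasurable measurable_snd.aestronglyMeasurable).symm
    have e2 : ∫ ω, (Z ⟨0, hn⟩ ω).2 ∂μ
        = ∫ p : α × ℝ, p.2 ∂(Measure.map (Z ⟨0, hn⟩) μ) :=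
      (integral_map (hZmeas _).aemeasurable measurable_snd.aestronglyMeasurable).symm
    rw [e1, e2, hident i]
  have hlawZ1 : ∀ i : Fin n,
      Measure.map (fun ω => (Z i ω).1) μ = Measure.map (fun ω => (Z ⟨0, hn⟩ ω).1) μ := by
    intro i
    have e1 : Measure.map (fun ω => (Z i ω).1) μ
        = Measure.map Prod.fst (Measure.map (Z i) μ) :=
      (Measure.map_map measurable_fst (hZmeas i)).symm
    have e2 : Measure.map (fun ω => (Z ⟨0, hn⟩ ω).1) μ
        = Measure.map Prod.fst (Measure.map (Z ⟨0, hn⟩) μ) :=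
      (Measure.map_map measurable_fst (hZmeas _)).symm
    rw [e1, e2, hident i]
  -- the per-fold computation
  have key : ∀ k : Fin K,
      Integrable (fun ω =>
        (1 / (N : ℝ)) * ∑ j, φ k (fun i => Z i ω) (Xt j ω)
          - (1 / ((I k).card : ℝ)) * ∑ i ∈ I k,
              (φ k (fun i' => Z i' ω) ((Z i ω).1) - (Z i ω).2)) μ ∧
      ∫ ω, ((1 / (N : ℝ)) * ∑ j, φ k (fun i => Z i ω) (Xt j ω)
          - (1 / ((I k).card : ℝ)) * ∑ i ∈ I k,
              (φ k (fun i' => Z i' ω) ((Z i ω).1) - (Z i ω).2)) ∂μ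
        = ∫ ω, (Z ⟨0, hn⟩ ω).2 ∂μ := by
    intro k
    set C : Finset (Fin n) := (I k)ᶜ with hC
    set W : Ω → (C → α × ℝ) := fun ω i => Z i.1 ω with hW
    have hWmeas : Measurable W := measurable_pi_lambda _ fun i => hZmeas i.1
    set extend : (C → α × ℝ) → (Fin n → α × ℝ) :=
      fun e i => if h : i ∈ C then e ⟨i, h⟩ else z0 with hextend
    have hextmeas : Measurable extend := by
      apply measurable_pi_lambda
      intro i
      by_cases h : i ∈ C
      · simpa only [hextend, dif_pos h] using measurable_pi_apply (⟨i, h⟩ : C)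
      · simpa only [hextend, dif_neg h] using (measurable_const : Measurable fun _ => z0)
    set ψ : (C → α × ℝ) × α → ℝ := fun p => φ k (extend p.1) p.2 with hψ
    have hψmeas : Measurable ψ :=
      (hφmeas k).comp ((hextmeas.comp measurable_fst).prodMk measurable_snd)
    have hφψ : ∀ (ω : Ω) (x : α), φ k (fun i => Z i ω) x = ψ (W ω, x) := by
      intro ω x
      have h : ∀ i ∉ I k, (fun i => Z i ω) i = extend (W ω) i := by
        intro i hi
        have hiC : i ∈ C := Finset.mem_compl.mpr hi
        show Z i ω = extend (W ω) i
        simp only [hextend, dif_pos hiC, hW]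
      exact congrFun (hout k _ _ h) x
    set S : Finset (Fin n ⊕ Fin N) := C.image Sum.inl with hS
    have hWind : ∀ t : Fin n ⊕ Fin N, t ∉ S →
        IndepFun W (fun ω => (f t ω).1) μ := by
      intro t ht
      have hST : Disjoint S ({t} : Finset _) := Finset.disjoint_singleton_right.mpr ht
      have h := hindep.indepFun_finset S {t} hST hfmeas
      have hg₁ : Measurable (fun (v : S → α × ℝ) (i : C) =>
          v ⟨Sum.inl i.1, Finset.mem_image_of_mem _ i.2⟩) :=
        measurable_pi_lambda _ fun i => measurable_pi_apply _
      have hg₂ : Measurable (fun (v : ({t} : Finset (Fin n ⊕ Fin N)) → α × ℝ) =>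
          (v ⟨t, Finset.mem_singleton_self t⟩).1) :=
        measurable_fst.comp (measurable_pi_apply _)
      exact h.comp hg₁ hg₂
    set ν : Measure ((C → α × ℝ) × α) :=
      (Measure.map W μ).prod (Measure.map (fun ω => (Z ⟨0, hn⟩ ω).1) μ) with hν
    have hjoint : ∀ (U : Ω → α), Measurable U →
        IndepFun W U μ →
        Measure.map U μ = Measure.map (fun ω => (Z ⟨0, hn⟩ ω).1) μ →
        Measure.map (fun ω => (W ω, U ω)) μ = ν := by
      intro U hU hind hlaw
      rw [(indepFun_iff_map_prod_eq_prod_map_map hWmeas.aemeasurable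
        hU.aemeasurable).mp hind, hlaw]
    have haux : ∀ (U : Ω → α), Measurable U →
        Measure.map (fun ω => (W ω, U ω)) μ = ν →
        (Integrable (fun ω => ψ (W ω, U ω)) μ ↔ Integrable ψ ν) ∧
        ∫ ω, ψ (W ω, U ω) ∂μ = ∫ p, ψ p ∂ν := by
      intro U hU hmap
      have hpair : AEMeasurable (fun ω => (W ω, U ω)) μ := (hWmeas.prodMk hU).aemeasurable
      constructor
      · rw [← hmap]
        exact (integrable_map_measure hψmeas.aestronglyMeasurable hpair).symm
      · rw [← hmap]
        exact (integral_map hpair hψmeas.aestronglyMeasurable).symm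
    have hXind : ∀ j : Fin N, Measure.map (fun ω => (W ω, Xt j ω)) μ = ν := by
      intro j
      have ht : (Sum.inr j : Fin n ⊕ Fin N) ∉ S := by
        simp [hS]
      have hind : IndepFun W (Xt j) μ := hWind (Sum.inr j) ht
      exact hjoint (Xt j) (hXtmeas j) hind (hidentX j)
    have hZind : ∀ i ∈ I k, Measure.map (fun ω => (W ω, (Z i ω).1)) μ = ν := by
      intro i hi
      have ht : (Sum.inl i : Fin n ⊕ Fin N) ∉ S := by
        intro hmem
        rw [hS, Finset.mem_image] at hmem
        obtain ⟨a, haC, hae⟩ := hmem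
        rw [Sum.inl.injEq] at hae
        subst hae
        exact (Finset.mem_compl.mp haC) hi
      have hind : IndepFun W (fun ω => (Z i ω).1) μ := hWind (Sum.inl i) ht
      exact hjoint _ (hZmeas i).fst hind (hlawZ1 i)
    have hψint : Integrable ψ ν := by
      have h1 := (haux (Xt ⟨0, hN⟩) (hXtmeas _) (hXind ⟨0, hN⟩)).1
      rw [← h1]
      have h0 := hfint k
      simpa only [hφψ] using h0
    have hfj : ∀ j : Fin N,
        Integrable (fun ω => φ k (fun i => Z i ω) (Xt j ω)) μ ∧
        ∫ ω, φ k (fun i => Z i ω) (Xt j ω) ∂μ = ∫ p, ψ p ∂ν := by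
      intro j
      obtain ⟨hi1, hi2⟩ := haux (Xt j) (hXtmeas j) (hXind j)
      constructor
      · simpa only [hφψ] using hi1.mpr hψint
      · calc ∫ ω, φ k (fun i => Z i ω) (Xt j ω) ∂μ
            = ∫ ω, ψ (W ω, Xt j ω) ∂μ := by simp only [hφψ]
          _ = ∫ p, ψ p ∂ν := hi2
    have hfi : ∀ i ∈ I k,
        Integrable (fun ω => φ k (fun i' => Z i' ω) ((Z i ω).1)) μ ∧
        ∫ ω, φ k (fun i' => Z i' ω) ((Z i ω).1) ∂μ = ∫ p, ψ p ∂ν := by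
      intro i hi
      obtain ⟨hi1, hi2⟩ := haux _ (hZmeas i).fst (hZind i hi)
      constructor
      · simpa only [hφψ] using hi1.mpr hψint
      · calc ∫ ω, φ k (fun i' => Z i' ω) ((Z i ω).1) ∂μ
            = ∫ ω, ψ (W ω, (Z i ω).1) ∂μ := by simp only [hφψ]
          _ = ∫ p, ψ p ∂ν := hi2
    have hsum1 : Integrable (fun ω => ∑ j, φ k (fun i => Z i ω) (Xt j ω)) μ :=
      integrable_finset_sum _ fun j _ => (hfj j).1
    have hsum2 : Integrable (fun ω =>
        ∑ i ∈ I k, (φ k (fun i' => Z i' ω) ((Z i ω).1) - (Z i ω).2)) μ :=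
      integrable_finset_sum _ fun i hi => ((hfi i hi).1.sub (hYint' i))
    have hsd : ∀ i ∈ I k, Integrable
        (fun ω => φ k (fun i' => Z i' ω) ((Z i ω).1) - (Z i ω).2) μ :=
      fun i hi => (hfi i hi).1.sub (hYint' i)
    refine ⟨(hsum1.const_mul _).sub (hsum2.const_mul _), ?_⟩
    rw [integral_sub (hsum1.const_mul _) (hsum2.const_mul _),
        integral_const_mul, integral_const_mul,
        integral_finset_sum _ (fun j _ => (hfj j).1),
        integral_finset_sum _ hsd]
    have e2 : ∀ i ∈ I k, ∫ ω, (φ k (fun i' => Z i' ω) ((Z i ω).1) - (Z i ω).2) ∂μ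
        = (∫ p, ψ p ∂ν) - ∫ ω, (Z ⟨0, hn⟩ ω).2 ∂μ := by
      intro i hi
      rw [integral_sub (hfi i hi).1 (hYint' i), (hfi i hi).2, hYeq i]
    rw [Finset.sum_congr rfl (fun j _ => (hfj j).2), Finset.sum_congr rfl e2]
    simp only [Finset.sum_const, Finset.card_univ, Fintype.card_fin, nsmul_eq_mul]
    have hNne : (N : ℝ) ≠ 0 := Nat.cast_ne_zero.mpr hN.ne'
    have hkne : ((I k).card : ℝ) ≠ 0 :=
      Nat.cast_ne_zero.mpr (Nat.one_le_iff_ne_zero.mp (hne k))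
    field_simp
    ring
  rw [integral_const_mul, integral_finset_sum _ (fun k _ => (key k).1),
      Finset.sum_congr rfl (fun k _ => (key k).2)]
  simp only [Finset.sum_const, Finset.card_univ, Fintype.card_fin, nsmul_eq_mul]
  have hKne : (K : ℝ) ≠ 0 := Nat.cast_ne_zero.mpr hK.ne'
  field_simp
end
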